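/- arXiv:2505.17462 — 2 statements merged into one kernel-verified Lean document; each statement's English description precedes it below -/
import Mathlib

section
/- For ε ∈ [0, 1/10), integer k > 2, and all x ∈ [0,1] with x ≠ 1/2, the cusp tent map T_ε satisfies |T_ε'(x)| ≥ (27k + 9)/(20k), and (27k + 9)/(20k) > 1. -/
open Set

/-- The cusp tent map satisfies the uniform expansion estimate
`|T_ε'(x)| ≥ (27k+9)/(20k) > 1` for all `x ∈ [0,1]`, `x ≠ 1/2`. -/
theorem cusp_tent_uniform_expansion (ε : ℝ) (hε : ε ∈ Set.Ico (0:ℝ) (1/10))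
    (k : ℕ) (hk : 2 < k) (T' : ℝ → ℝ)
    (hL : ∀ x ∈ Set.Ico (0:ℝ) (1/2),
      T' x = (1-ε) * (3/2 + (1/(2*(k:ℝ))) * (1-2*x) ^ ((1 - (k:ℝ))/k)))
    (hR : ∀ x ∈ Set.Ioc (1/2:ℝ) 1,
      T' x = -((1-ε) * (3/2 + (1/(2*(k:ℝ))) * (2*x-1) ^ ((1 - (k:ℝ))/k)))) :
    (∀ x ∈ Set.Icc (0:ℝ) 1, x ≠ 1/2 → (27*(k:ℝ) + 9)/(20*(k:ℝ)) ≤ |T' x|) ∧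
    1 < (27*(k:ℝ) + 9)/(20*(k:ℝ)) := by
  have hk2 : (2:ℝ) < k := by exact_mod_cast hk
  have hkpos : (0:ℝ) < k := by linarith
  have hp : (1 - (k:ℝ))/k ≤ 0 :=
    div_nonpos_of_nonpos_of_nonneg (by linarith) hkpos.le
  have hε' : (9:ℝ)/10 ≤ 1 - ε := by
    have := hε.2; rw [Set.mem_Ico] at hε; linarith [hε.2]
  have hbound : ∀ u : ℝ, 0 < u → u ≤ 1 →
      (27*(k:ℝ) + 9)/(20*(k:ℝ)) ≤
        (1-ε) * (3/2 + (1/(2*(k:ℝ))) * u ^ ((1 - (k:ℝ))/k)) := by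
    intro u hu0 hu1
    have hw : 1 ≤ u ^ ((1 - (k:ℝ))/k) :=
      Real.one_le_rpow_of_pos_of_le_one_of_nonpos hu0 hu1 hp
    have hc : (0:ℝ) < 1/(2*(k:ℝ)) := by positivity
    have h1 : (3:ℝ)/2 + 1/(2*(k:ℝ)) ≤ 3/2 + (1/(2*(k:ℝ))) * u ^ ((1 - (k:ℝ))/k) := by
      nlinarith
    have h2 : (27*(k:ℝ) + 9)/(20*(k:ℝ)) = (9/10) * (3/2 + 1/(2*(k:ℝ))) := by
      field_simp; ring
    rw [h2]
    have h3 : (0:ℝ) < 3/2 + 1/(2*(k:ℝ)) := by positivity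
    nlinarith
  constructor
  · intro x hx hne
    rcases lt_or_gt_of_ne hne with h | h
    · rw [hL x ⟨hx.1, h⟩]
      refine le_trans (hbound (1-2*x) (by linarith) (by linarith [hx.1])) (le_abs_self _)
    · rw [hR x ⟨h, hx.2⟩, abs_neg]
      refine le_trans (hbound (2*x-1) (by linarith) (by linarith [hx.2])) (le_abs_self _)
  · rw [lt_div_iff₀ (by linarith : (0:ℝ) < 20*(k:ℝ))]
    linarith
end

section
/- Let p > 1 and let g ∈ W^{1,p}(0,1). Define (P_{D_ε} g)(x) = (1−ε)^{−1} g(x/(1−ε)) 1_{[0,1−ε]}(x) for ε ∈ (0,1/2). Then ‖g − P_{D_ε} g‖_{L^{2p}(0,1)} → 0 as ε → 0⁺. Moreover the convergence is uniform over the ball {g : ‖g‖_{W^{1,p}} ≤ M} for each fixed M > 0. -/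
/-!
Writing `g x - g y = ∫_y^x g'`, Hölder's inequality makes `g` Hölder continuous with exponent
`1 - 1/p` and constant `‖g'‖_p`; comparing with a point where `|g|` is minimal then bounds `|g|`
by `‖g‖_p + ‖g'‖_p ≤ M`. On `[0, 1-ε]` the point `x/(1-ε)` lies within `η = ε/(1-ε)` of `x`
and `(1-ε)⁻¹ = 1 + η`, so the integrand is at most `(M η^(1-1/p) + η M)^(2p)`; on `(1-ε, 1]`,
a set of length `ε`, it is at most `M^(2p)`. Both bounds depend on `g` only through `M` and
vanish as `ε → 0`.
-/

open MeasureTheory Set Filter Topology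

lemma integral_abs_le_rpow_integral_mul_measureReal {α : Type*} [MeasurableSpace α]
    {μ : Measure α} [IsFiniteMeasure μ] {f : α → ℝ} {p : ℝ} (hp : 1 < p)
    (hf : AEStronglyMeasurable f μ) (hfp : Integrable (fun x => |f x| ^ p) μ) :
    ∫ x, |f x| ∂μ ≤ (∫ x, |f x| ^ p ∂μ) ^ (1 / p) * μ.real univ ^ (1 - 1 / p) := by
  have hpq := Real.HolderConjugate.conjExponent hp
  have hfLp : MemLp f (ENNReal.ofReal p) μ := by
    rw [← integrable_norm_rpow_iff hf (by simpa using hpq.pos) ENNReal.ofReal_ne_top,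
      ENNReal.toReal_ofReal hpq.nonneg]
    simpa only [Real.norm_eq_abs] using hfp
  have := integral_mul_norm_le_Lp_mul_Lq hpq hfLp (memLp_const (1 : ℝ))
  simpa [Real.norm_eq_abs, hpq.one_sub_inv, integral_const] using this

lemma abs_intervalIntegral_le_rpow_integral_mul {f : ℝ → ℝ} {p a b : ℝ} (hp : 1 < p)
    (hab : a ≤ b) (hf : IntegrableOn f (Ioc a b))
    (hfp : IntegrableOn (fun t => |f t| ^ p) (Ioc a b)) :
    |∫ t in a..b, f t| ≤ (∫ t in Ioc a b, |f t| ^ p) ^ (1 / p) * (b - a) ^ (1 - 1 / p) := by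
  have : IsFiniteMeasure (volume.restrict (Ioc a b)) := by
    rw [isFiniteMeasure_restrict]; exact measure_Ioc_lt_top.ne
  calc |∫ t in a..b, f t| ≤ ∫ t in Ioc a b, |f t| := by
        simpa only [intervalIntegral.integral_of_le hab] using abs_integral_le_integral_abs
    _ ≤ _ := by
        simpa [Real.volume_real_Ioc_of_le hab] using
          integral_abs_le_rpow_integral_mul_measureReal hp hf.aestronglyMeasurable hfp

lemma abs_sub_le_rpow_integral_mul_of_eq_add_integral {g g' : ℝ → ℝ} {p a b : ℝ} (hp : 1 < p)
    (hg : ∀ x ∈ Icc a b, g x = g a + ∫ t in a..x, g' t) (hg' : IntegrableOn g' (Icc a b))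
    (hg'p : IntegrableOn (fun t => |g' t| ^ p) (Icc a b)) {x y : ℝ}
    (hx : x ∈ Icc a b) (hy : y ∈ Icc a b) :
    |g x - g y| ≤ (∫ t in Icc a b, |g' t| ^ p) ^ (1 / p) * |x - y| ^ (1 - 1 / p) := by
  wlog hyx : y ≤ x generalizing x y
  · rw [abs_sub_comm, abs_sub_comm x]
    exact this hy hx (le_of_not_ge hyx)
  have hsub : Ioc y x ⊆ Icc a b := Ioc_subset_Icc_self.trans (Icc_subset_Icc hy.1 hx.2)
  have hint : ∀ z ∈ Icc a b, IntervalIntegrable g' volume a z := fun z hz =>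
    (intervalIntegrable_iff_integrableOn_Icc_of_le hz.1).2
      (hg'.mono_set (Icc_subset_Icc le_rfl hz.2))
  have hdiff : g x - g y = ∫ t in y..x, g' t := by
    rw [hg x hx, hg y hy, ← intervalIntegral.integral_interval_sub_left (hint x hx) (hint y hy)]
    ring
  have hmono : ∫ t in Ioc y x, |g' t| ^ p ≤ ∫ t in Icc a b, |g' t| ^ p :=
    setIntegral_mono_set hg'p (ae_of_all _ fun t => by positivity) hsub.eventuallyLE
  rw [hdiff, abs_of_nonneg (sub_nonneg.2 hyx)]
  refine (abs_intervalIntegral_le_rpow_integral_mul hp hyx (hg'.mono_set hsub)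
    (hg'p.mono_set hsub)).trans ?_
  gcongr

lemma exists_abs_le_rpow_integral {g : ℝ → ℝ} {p : ℝ} (hp : 0 < p)
    (hg : ContinuousOn g (Icc 0 1)) (hgp : IntegrableOn (fun t => |g t| ^ p) (Icc 0 1)) :
    ∃ y ∈ Icc (0 : ℝ) 1, |g y| ≤ (∫ t in Icc (0 : ℝ) 1, |g t| ^ p) ^ (1 / p) := by
  obtain ⟨y, hy, hmin⟩ :=
    isCompact_Icc.exists_isMinOn (nonempty_Icc.2 zero_le_one) hg.abs
  refine ⟨y, hy, ?_⟩
  have hle : |g y| ^ p ≤ ∫ t in Icc (0 : ℝ) 1, |g t| ^ p := by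
    calc |g y| ^ p = ∫ _ in Icc (0 : ℝ) 1, |g y| ^ p := by simp
      _ ≤ _ := setIntegral_mono_on (integrableOn_const measure_Icc_lt_top.ne) hgp
          measurableSet_Icc fun t ht => Real.rpow_le_rpow (abs_nonneg _) (hmin ht) hp.le
  calc |g y| = (|g y| ^ p) ^ (1 / p) := by
        rw [one_div, Real.rpow_rpow_inv (abs_nonneg _) hp.ne']
    _ ≤ _ := by gcongr

lemma abs_le_rpow_integral_add_rpow_integral_deriv {g g' : ℝ → ℝ} {p : ℝ} (hp : 1 < p)
    (hg : ContinuousOn g (Icc 0 1)) (hftc : ∀ x ∈ Icc (0 : ℝ) 1, g x = g 0 + ∫ t in 0..x, g' t)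
    (hg' : IntegrableOn g' (Icc 0 1)) (hgp : IntegrableOn (fun t => |g t| ^ p) (Icc 0 1))
    (hg'p : IntegrableOn (fun t => |g' t| ^ p) (Icc 0 1)) {x : ℝ} (hx : x ∈ Icc (0 : ℝ) 1) :
    |g x| ≤ (∫ t in Icc (0 : ℝ) 1, |g t| ^ p) ^ (1 / p)
      + (∫ t in Icc (0 : ℝ) 1, |g' t| ^ p) ^ (1 / p) := by
  obtain ⟨y, hy, hgy⟩ := exists_abs_le_rpow_integral (by linarith) hg hgp
  have hxy : |x - y| ^ (1 - 1 / p) ≤ 1 :=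
    Real.rpow_le_one (abs_nonneg _)
      (abs_sub_le_iff.2 ⟨by linarith [hx.2, hy.1], by linarith [hx.1, hy.2]⟩)
      (sub_nonneg.2 ((div_le_one (by linarith)).2 hp.le))
  calc |g x| ≤ |g y| + |g x - g y| := by linarith [abs_sub_abs_le_abs_sub (g x) (g y)]
    _ ≤ _ := by
      gcongr
      refine (abs_sub_le_rpow_integral_mul_of_eq_add_integral hp hftc hg' hg'p hx hy).trans ?_
      exact mul_le_of_le_one_right (by positivity) hxy

lemma abs_sub_inv_mul_comp_div_le {g : ℝ → ℝ} {N S α ε x : ℝ} (hN : 0 ≤ N) (hα : 0 ≤ α)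
    (hε0 : 0 ≤ ε) (hε1 : ε < 1)
    (hHol : ∀ u ∈ Icc (0 : ℝ) 1, ∀ v ∈ Icc (0 : ℝ) 1, |g u - g v| ≤ N * |u - v| ^ α)
    (hS : ∀ u ∈ Icc (0 : ℝ) 1, |g u| ≤ S) (hx : x ∈ Icc 0 (1 - ε)) :
    |g x - (1 - ε)⁻¹ * g (x / (1 - ε))| ≤ N * (ε / (1 - ε)) ^ α + ε / (1 - ε) * S := by
  have hpos : 0 < 1 - ε := by linarith
  set η := ε / (1 - ε)
  have hη : 0 ≤ η := div_nonneg hε0 hpos.le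
  have hy : x / (1 - ε) ∈ Icc (0 : ℝ) 1 :=
    ⟨div_nonneg hx.1 hpos.le, (div_le_one hpos).2 hx.2⟩
  have hx1 : x ∈ Icc (0 : ℝ) 1 := ⟨hx.1, hx.2.trans (by linarith)⟩
  have hinv : (1 - ε)⁻¹ = 1 + η := by simp only [η]; field_simp; ring
  have hdist : |x - x / (1 - ε)| ≤ η := by
    rw [abs_sub_comm, div_eq_mul_inv, hinv, show x * (1 + η) - x = x * η by ring,
      abs_of_nonneg (mul_nonneg hx.1 hη)]
    exact mul_le_of_le_one_left hη hx1.2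
  calc |g x - (1 - ε)⁻¹ * g (x / (1 - ε))|
      = |(g x - g (x / (1 - ε))) - η * g (x / (1 - ε))| := by rw [hinv]; ring_nf
    _ ≤ |g x - g (x / (1 - ε))| + η * |g (x / (1 - ε))| :=
        (abs_sub _ _).trans_eq (by rw [abs_mul, abs_of_nonneg hη])
    _ ≤ N * η ^ α + η * S := by
        gcongr
        · exact (hHol x hx1 _ hy).trans (by gcongr)
        · exact hS _ hy

lemma setIntegral_Icc_abs_rpow_le {h : ℝ → ℝ} {A S r c : ℝ} (hr : 0 ≤ r) (hc0 : 0 ≤ c)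
    (hc1 : c ≤ 1) (hA : ∀ x ∈ Icc 0 c, |h x| ≤ A) (hS : ∀ x ∈ Ioc c 1, |h x| ≤ S) :
    ∫ x in Icc 0 1, |h x| ^ r ≤ A ^ r * c + S ^ r * (1 - c) := by
  set B₁ : ℝ → ℝ := (Icc 0 c).indicator fun _ => A ^ r
  set B₂ : ℝ → ℝ := (Ioc c 1).indicator fun _ => S ^ r
  have hB₁ : IntegrableOn B₁ (Icc 0 1) :=
    (integrableOn_const measure_Icc_lt_top.ne).indicator measurableSet_Icc
  have hB₂ : IntegrableOn B₂ (Icc 0 1) :=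
    (integrableOn_const measure_Icc_lt_top.ne).indicator measurableSet_Ioc
  have hle : ∀ x ∈ Icc (0 : ℝ) 1, |h x| ^ r ≤ B₁ x + B₂ x := by
    intro x hx
    rcases le_or_gt x c with hxc | hxc
    · have : x ∉ Ioc c 1 := fun hx' => hxc.not_gt hx'.1
      simpa [B₁, B₂, hx.1, hxc, this] using
        Real.rpow_le_rpow (abs_nonneg _) (hA x ⟨hx.1, hxc⟩) hr
    · have : x ∉ Icc 0 c := fun hx' => hxc.not_ge hx'.2
      simpa [B₁, B₂, hxc, hx.2, this] using
        Real.rpow_le_rpow (abs_nonneg _) (hS x ⟨hxc, hx.2⟩) hr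
  have hB₁_eq : ∫ x in Icc 0 1, B₁ x = A ^ r * c := by
    rw [integral_indicator measurableSet_Icc, Measure.restrict_restrict measurableSet_Icc,
      inter_eq_left.2 (Icc_subset_Icc le_rfl hc1), setIntegral_const,
      Real.volume_real_Icc_of_le hc0, smul_eq_mul, sub_zero, mul_comm]
  have hB₂_eq : ∫ x in Icc 0 1, B₂ x = S ^ r * (1 - c) := by
    rw [integral_indicator measurableSet_Ioc, Measure.restrict_restrict measurableSet_Ioc,
      inter_eq_left.2 (Ioc_subset_Icc_self.trans (Icc_subset_Icc hc0 le_rfl)), setIntegral_const,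
      Real.volume_real_Ioc_of_le hc1, smul_eq_mul, mul_comm]
  calc ∫ x in Icc 0 1, |h x| ^ r ≤ ∫ x in Icc 0 1, (B₁ x + B₂ x) :=
        integral_mono_of_nonneg (ae_of_all _ fun _ => by positivity) (hB₁.add hB₂)
          ((ae_restrict_iff' measurableSet_Icc).2 (ae_of_all _ hle))
    _ = A ^ r * c + S ^ r * (1 - c) := by rw [integral_add hB₁ hB₂, hB₁_eq, hB₂_eq]

lemma tendsto_rescaling_error_bound (N S α r : ℝ) (hα : 0 < α) (hr : 0 < r) :
    Tendsto (fun ε : ℝ => (N * (ε / (1 - ε)) ^ α + ε / (1 - ε) * S) ^ r * (1 - ε)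
      + S ^ r * (1 - (1 - ε))) (𝓝 0) (𝓝 0) := by
  have : ContinuousAt (fun ε : ℝ => (N * (ε / (1 - ε)) ^ α + ε / (1 - ε) * S) ^ r * (1 - ε)
      + S ^ r * (1 - (1 - ε))) 0 := by
    fun_prop (disch := first | exact Or.inr hα.le | exact Or.inr hr.le | norm_num)
  simpa [Real.zero_rpow hα.ne', Real.zero_rpow hr.ne'] using this.tendsto

theorem transfer_rescaling_L2p_convergence_general (p M : ℝ) (hp : 1 < p) :
    ∀ δ > 0, ∃ ε₀ > 0, ∀ ε : ℝ, 0 < ε → ε < ε₀ → ε < 1/2 →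
      ∀ g g' : ℝ → ℝ, ContinuousOn g (Set.Icc (0:ℝ) 1) →
        (∀ x ∈ Set.Icc (0:ℝ) 1, g x = g 0 + ∫ t in (0:ℝ)..x, g' t) →
        MeasureTheory.IntegrableOn g' (Set.Icc (0:ℝ) 1) →
        MeasureTheory.IntegrableOn (fun t => |g t| ^ p) (Set.Icc (0:ℝ) 1) →
        MeasureTheory.IntegrableOn (fun t => |g' t| ^ p) (Set.Icc (0:ℝ) 1) →
        (∫ t in Set.Icc (0:ℝ) 1, |g t| ^ p) ^ (1/p)
          + (∫ t in Set.Icc (0:ℝ) 1, |g' t| ^ p) ^ (1/p) ≤ M →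
        (∫ x in Set.Icc (0:ℝ) 1,
            |g x - (if x ≤ 1-ε then (1-ε)⁻¹ * g (x/(1-ε)) else 0)| ^ (2*p)) ^ (1/(2*p)) ≤ δ := by
  intro δ hδ
  have hα : 0 < 1 - 1 / p := sub_pos.2 ((div_lt_one (by linarith)).2 hp)
  obtain ⟨ε₀, hε₀, hsmall⟩ := Metric.eventually_nhds_iff.1 <|
    (tendsto_rescaling_error_bound M M _ (2 * p) hα (by linarith)).eventually
      (gt_mem_nhds (by positivity : 0 < δ ^ (2 * p)))
  refine ⟨ε₀, hε₀, fun ε hε hεε₀ hε2 g g' hgc hftc hg'i hgp hg'p hball => ?_⟩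
  have hNg : 0 ≤ (∫ t in Icc (0 : ℝ) 1, |g t| ^ p) ^ (1 / p) := by positivity
  have hHol : ∀ x ∈ Icc (0 : ℝ) 1, ∀ y ∈ Icc (0 : ℝ) 1,
      |g x - g y| ≤ M * |x - y| ^ (1 - 1 / p) := fun x hx y hy =>
    (abs_sub_le_rpow_integral_mul_of_eq_add_integral hp hftc hg'i hg'p hx hy).trans
      (by gcongr; linarith)
  have hsup : ∀ x ∈ Icc (0 : ℝ) 1, |g x| ≤ M := fun x hx =>
    (abs_le_rpow_integral_add_rpow_integral_deriv hp hgc hftc hg'i hgp hg'p hx).trans hball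
  have hM : 0 ≤ M := (abs_nonneg _).trans (hsup 0 ⟨le_rfl, zero_le_one⟩)
  have hint := setIntegral_Icc_abs_rpow_le
    (h := fun x => g x - if x ≤ 1 - ε then (1 - ε)⁻¹ * g (x / (1 - ε)) else 0) (S := M)
    (r := 2 * p) (c := 1 - ε) (by linarith) (by linarith) (by linarith)
    (fun x hx => by
      rw [if_pos hx.2]
      exact abs_sub_inv_mul_comp_div_le hM hα.le hε.le (by linarith) hHol hsup hx)
    (fun x hx => by
      rw [if_neg (not_le.2 hx.1), sub_zero]
      exact hsup x (Ioc_subset_Icc_self.trans (Icc_subset_Icc (by linarith) le_rfl) hx))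
  rw [one_div, Real.rpow_inv_le_iff_of_pos (by positivity) hδ.le (by positivity)]
  exact hint.trans (hsmall (by rwa [dist_zero_right, Real.norm_eq_abs, abs_of_pos hε])).le

/-- The transfer operator `P_{D_ε}` of `D_ε(x) = (1-ε)x` converges to the identity in
`L^{2p}`: `‖g - P_{D_ε} g‖_{L^{2p}(0,1)} → 0` as `ε → 0⁺`, uniformly over the ball
`‖g‖_{W^{1,p}} ≤ M`. -/
theorem transfer_rescaling_L2p_convergence (p M : ℝ) (hp : 1 < p) (hM : 0 < M) :
    ∀ δ > 0, ∃ ε₀ > 0, ∀ ε : ℝ, 0 < ε → ε < ε₀ → ε < 1/2 →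
      ∀ g g' : ℝ → ℝ, ContinuousOn g (Set.Icc (0:ℝ) 1) →
        (∀ x ∈ Set.Icc (0:ℝ) 1, g x = g 0 + ∫ t in (0:ℝ)..x, g' t) →
        MeasureTheory.IntegrableOn g' (Set.Icc (0:ℝ) 1) →
        MeasureTheory.IntegrableOn (fun t => |g t| ^ p) (Set.Icc (0:ℝ) 1) →
        MeasureTheory.IntegrableOn (fun t => |g' t| ^ p) (Set.Icc (0:ℝ) 1) →
        (∫ t in Set.Icc (0:ℝ) 1, |g t| ^ p) ^ (1/p)
          + (∫ t in Set.Icc (0:ℝ) 1, |g' t| ^ p) ^ (1/p) ≤ M →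
        (∫ x in Set.Icc (0:ℝ) 1,
            |g x - (if x ≤ 1-ε then (1-ε)⁻¹ * g (x/(1-ε)) else 0)| ^ (2*p)) ^ (1/(2*p)) ≤ δ :=
  transfer_rescaling_L2p_convergence_general p M hp
end
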